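/- arXiv:2605.19083 — 12 statements merged into one kernel-verified Lean document; each statement's English description precedes it below -/
import Mathlib

section
/- Let a, b, k be positive integers with a² + a + b² + b = k·a·b. Then the integer a' = k·b − 1 − a satisfies: a' is a positive integer, (a')² + a' + b² + b = k·a'·b, a·a' = b² + b, and if moreover a > b then a' ≤ b < a, so the new solution (a', b) has strictly smaller coordinate sum than (a, b). -/
theorem vieta_jump_first_coordinate (a b k : ℤ) (ha : 0 < a) (hb : 0 < b) (hk : 0 < k)
    (h : a ^ 2 + a + b ^ 2 + b = k * a * b) :
    0 < k * b - 1 - a ∧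
    (k * b - 1 - a) ^ 2 + (k * b - 1 - a) + b ^ 2 + b = k * (k * b - 1 - a) * b ∧
    a * (k * b - 1 - a) = b ^ 2 + b ∧
    (b < a → k * b - 1 - a ≤ b ∧ b < a ∧ (k * b - 1 - a) + b < a + b) := by
  have hprod : a * (k * b - 1 - a) = b ^ 2 + b := by nlinarith
  have hpos : 0 < k * b - 1 - a := by
    have h1 : 0 < a * (k * b - 1 - a) := by nlinarith
    by_contra hc
    push_neg at hc
    nlinarith
  refine ⟨hpos, by nlinarith, hprod, fun hba => ?_⟩
  have hle : k * b - 1 - a ≤ b := by nlinarith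
  exact ⟨hle, hba, by linarith⟩
end

section
/- Let a, b, k be positive integers with a² + a + b² + b = k·a·b and a ≥ b. Then the integer b' = k·a − 1 − b satisfies: b' is a positive integer, a² + a + (b')² + b' = k·a·b', b·b' = a² + a, and b' ≥ b + 1, so the new solution (a, b') has strictly larger coordinate sum than (a, b). -/
theorem vieta_jump_second_coordinate (a b k : ℤ) (ha : 0 < a) (hb : 0 < b) (hk : 0 < k)
    (hab : b ≤ a) (h : a ^ 2 + a + b ^ 2 + b = k * a * b) :
    0 < k * a - 1 - b ∧
    a ^ 2 + a + (k * a - 1 - b) ^ 2 + (k * a - 1 - b) = k * a * (k * a - 1 - b) ∧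
    b * (k * a - 1 - b) = a ^ 2 + a ∧
    b + 1 ≤ k * a - 1 - b ∧
    a + b < a + (k * a - 1 - b) := by
  have key : b * (k * a - 1 - b) = a ^ 2 + a := by linear_combination -h
  have hpos : 0 < k * a - 1 - b := by
    by_contra hc
    push_neg at hc
    nlinarith
  have hge : b + 1 ≤ k * a - 1 - b := by
    have : b * (b + 1) ≤ b * (k * a - 1 - b) := by nlinarith
    exact le_of_mul_le_mul_left this hb
  refine ⟨hpos, by linear_combination h, key, hge, by linarith⟩
end

section
/- If a, b, k are positive integers satisfying a² + a + b² + b = k·a·b, then k = 3 or k = 4. -/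
lemma k_aux (k : ℕ) : ∀ n a b : ℕ, a + b ≤ n → 0 < a → 0 < b →
    a ^ 2 + a + b ^ 2 + b = k * a * b → k = 3 ∨ k = 4 := by
  intro n
  induction n with
  | zero => intro a b hn ha hb _; omega
  | succ n ih =>
    suffices H : ∀ a b : ℕ, b ≤ a → a + b ≤ n + 1 → 0 < a → 0 < b →
        a ^ 2 + a + b ^ 2 + b = k * a * b → k = 3 ∨ k = 4 by
      intro a b hn ha hb h
      rcases le_total b a with hba | hab
      · exact H a b hba hn ha hb h
      · refine H b a hab (by omega) hb ha ?_
        have : k * b * a = k * a * b := by ring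
        rw [this]; linarith [h]
    intro a b hba hn ha hb h
    rcases eq_or_lt_of_le hba with rfl | hba'
    · -- a = b case: k * b = 2b + 2
      have hk : k * b = 2 * b + 2 := by
        have h2 : b * (2 * b + 2) = b * (k * b) := by linear_combination h
        exact (Nat.eq_of_mul_eq_mul_left hb h2).symm
      have h3 : 2 < k := by nlinarith
      have h4 : k ≤ 4 := by nlinarith
      omega
    · -- b < a : Vieta jump
      have hZ : (a : ℤ) ^ 2 + a + b ^ 2 + b = k * a * b := by exact_mod_cast h
      have key : (a : ℤ) * ((k : ℤ) * b - a - 1) = b ^ 2 + b := by linear_combination -hZ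
      have hcpos : (0 : ℤ) < (k : ℤ) * b - a - 1 := by
        by_contra hle
        push_neg at hle
        have h1 : (a : ℤ) * ((k : ℤ) * b - a - 1) ≤ 0 :=
          mul_nonpos_of_nonneg_of_nonpos (by positivity) hle
        have h2 : (0 : ℤ) < (b : ℤ) ^ 2 + b := by positivity
        linarith [key]
      have hab2 : a + 2 ≤ k * b := by
        have : (a : ℤ) + 2 ≤ (k : ℤ) * b := by linarith
        exact_mod_cast this
      set c : ℕ := k * b - a - 1 with hc
      have hsum : c + a + 1 = k * b := by omega
      have hsumZ : (c : ℤ) + a + 1 = (k : ℤ) * b := by exact_mod_cast hsum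
      have keyc : (a : ℤ) * c = (b : ℤ) ^ 2 + b := by
        have : ((k : ℤ) * b - a - 1) = c := by linarith
        rw [← this]; exact key
      have hcpos' : 0 < c := by
        have : (0 : ℤ) < (c : ℤ) := by linarith
        exact_mod_cast this
      have hclt : c < a := by
        by_contra hge
        push_neg at hge
        have hgeZ : (a : ℤ) ≤ (c : ℤ) := by exact_mod_cast hge
        have hbz : (b : ℤ) + 1 ≤ (a : ℤ) := by exact_mod_cast hba'
        nlinarith [keyc, mul_le_mul_of_nonneg_left hgeZ (by positivity : (0:ℤ) ≤ (a:ℤ))]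
      have heq : (c : ℤ) ^ 2 + c + b ^ 2 + b = (k : ℤ) * c * b := by
        linear_combination -keyc + (c : ℤ) * hsumZ
      have heqN : c ^ 2 + c + b ^ 2 + b = k * c * b := by exact_mod_cast heq
      exact ih c b (by omega) hcpos' hb heqN

theorem k_eq_three_or_four (a b k : ℕ) (ha : 0 < a) (hb : 0 < b) (hk : 0 < k)
    (h : a ^ 2 + a + b ^ 2 + b = k * a * b) : k = 3 ∨ k = 4 := by
  exact k_aux k (a + b) a b le_rfl ha hb h
end

section
/- Define the sequence (aₙ) of positive integers by a₀ = a₁ = 2 and aₙ = 3aₙ₋₁ − 1 − aₙ₋₂ for n ≥ 2. Then for all n ≥ 1, aₙ = F(2n−1) + 1, where F denotes the Fibonacci sequence with F(1) = F(2) = 1; moreover a₀ = 2 (which equals F(−1) + 1 under the convention F(−1) = 1). -/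
theorem aseq_eq_fib_add_one (a : ℕ → ℕ) (h0 : a 0 = 2) (h1 : a 1 = 2)
    (hrec : ∀ n, a (n + 2) + a n + 1 = 3 * a (n + 1)) :
    (∀ n, 1 ≤ n → a n = Nat.fib (2 * n - 1) + 1) ∧ a 0 = 2 := by
  refine ⟨?_, h0⟩
  have key : ∀ n, a (n + 1) = Nat.fib (2 * n + 1) + 1 ∧
      a (n + 2) = Nat.fib (2 * n + 3) + 1 := by
    intro n
    induction n with
    | zero =>
      have h2 := hrec 0
      have f1 : Nat.fib 1 = 1 := by decide
      have f3 : Nat.fib 3 = 2 := by decide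
      simp only [Nat.mul_zero, Nat.zero_add] at *
      omega
    | succ k ih =>
      obtain ⟨ih1, ih2⟩ := ih
      have h3 : a (k + 3) + a (k + 1) + 1 = 3 * a (k + 2) := hrec (k + 1)
      have f5 : Nat.fib (2 * k + 5) = Nat.fib (2 * k + 3) + Nat.fib (2 * k + 4) :=
        Nat.fib_add_two
      have f4 : Nat.fib (2 * k + 4) = Nat.fib (2 * k + 2) + Nat.fib (2 * k + 3) :=
        Nat.fib_add_two
      have f3 : Nat.fib (2 * k + 3) = Nat.fib (2 * k + 1) + Nat.fib (2 * k + 2) :=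
        Nat.fib_add_two
      constructor
      · show a (k + 2) = Nat.fib (2 * k + 3) + 1
        exact ih2
      · show a (k + 3) = Nat.fib (2 * k + 5) + 1
        omega
  intro n hn
  obtain ⟨m, rfl⟩ : ∃ m, n = m + 1 := ⟨n - 1, by omega⟩
  have h := (key m).1
  have e : 2 * (m + 1) - 1 = 2 * m + 1 := by omega
  rw [e]
  exact h
end

section
/- Define aₙ = F(2n−1) + 1 for n ≥ 1 and a₀ = 2, where F is the Fibonacci sequence. Then for every n ≥ 0, the pair (aₙ, aₙ₊₁) satisfies aₙ² + aₙ + aₙ₊₁² + aₙ₊₁ = 3·aₙ·aₙ₊₁, i.e. consecutive terms of the sequence are solutions for k = 3. -/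
lemma fib_sum_step (n : ℕ) :
    Nat.fib (2 * n + 5) + Nat.fib (2 * n + 1) = 3 * Nat.fib (2 * n + 3) := by
  have h1 : Nat.fib (2 * n + 5) = Nat.fib (2 * n + 3) + Nat.fib (2 * n + 4) :=
    Nat.fib_add_two (n := 2 * n + 3)
  have h2 : Nat.fib (2 * n + 4) = Nat.fib (2 * n + 2) + Nat.fib (2 * n + 3) :=
    Nat.fib_add_two (n := 2 * n + 2)
  have h3 : Nat.fib (2 * n + 3) = Nat.fib (2 * n + 1) + Nat.fib (2 * n + 2) :=
    Nat.fib_add_two (n := 2 * n + 1)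
  omega

lemma fib_key (n : ℕ) :
    Nat.fib (2 * n + 1) ^ 2 + Nat.fib (2 * n + 3) ^ 2 + 1 =
      3 * Nat.fib (2 * n + 1) * Nat.fib (2 * n + 3) := by
  induction n with
  | zero => norm_num [Nat.fib]
  | succ m ih =>
    have hs := fib_sum_step m
    have h5 : 2 * (m + 1) + 1 = 2 * m + 3 := by ring
    have h6 : 2 * (m + 1) + 3 = 2 * m + 5 := by ring
    rw [h5, h6]
    nlinarith [ih, hs, Nat.fib_pos.mpr (show 0 < 2 * m + 3 by omega)]

theorem consecutive_terms_solve_k3 (a : ℕ → ℕ) (h0 : a 0 = 2)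
    (hn : ∀ n, 1 ≤ n → a n = Nat.fib (2 * n - 1) + 1) :
    ∀ n, (a n) ^ 2 + a n + (a (n + 1)) ^ 2 + a (n + 1) = 3 * a n * a (n + 1) := by
  intro n
  match n with
  | 0 =>
    have h1 : a 1 = Nat.fib 1 + 1 := by simpa using hn 1 (by norm_num)
    simp [h0, h1, Nat.fib]
  | Nat.succ m =>
    have h1 : a (m + 1) = Nat.fib (2 * m + 1) + 1 := by
      have := hn (m + 1) (by omega)
      have : a (m + 1) = Nat.fib (2 * (m + 1) - 1) + 1 := this
      have he : 2 * (m + 1) - 1 = 2 * m + 1 := by omega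
      rwa [he] at this
    have h2 : a (m + 2) = Nat.fib (2 * m + 3) + 1 := by
      have := hn (m + 2) (by omega)
      have he : 2 * (m + 2) - 1 = 2 * m + 3 := by omega
      rwa [he] at this
    have key := fib_key m
    rw [h1, h2]
    nlinarith [key]
end

section
/- Let a ≤ b be positive integers with a² + a + b² + b = 3ab. Then either (a, b) = (2, 2), or there exists n ≥ 1 such that a = F(2n−1) + 1 and b = F(2n+1) + 1, where F is the Fibonacci sequence. Consequently, the set of all solutions for k = 3 is { (F(2n−1)+1, F(2n+1)+1) : n ≥ 1 } ∪ { (F(2n+1)+1, F(2n−1)+1) : n ≥ 1 } ∪ { (2,2), (3,2) } (with (3,2) = (F(1)+1+1, 2) arising as the flip of (2,3)). -/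
lemma fibid (k : ℕ) : Nat.fib (2*k+5) + Nat.fib (2*k+1) = 3 * Nat.fib (2*k+3) := by
  have h1 : Nat.fib (2*k+5) = Nat.fib (2*k+3) + Nat.fib (2*k+4) := Nat.fib_add_two
  have h2 : Nat.fib (2*k+4) = Nat.fib (2*k+2) + Nat.fib (2*k+3) := Nat.fib_add_two
  have h3 : Nat.fib (2*k+3) = Nat.fib (2*k+1) + Nat.fib (2*k+2) := Nat.fib_add_two
  omega

lemma sol' (m : ℕ) :
    (Nat.fib (2*m+1)+1)^2 + (Nat.fib (2*m+1)+1) + (Nat.fib (2*m+3)+1)^2 + (Nat.fib (2*m+3)+1)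
      = 3 * (Nat.fib (2*m+1)+1) * (Nat.fib (2*m+3)+1) := by
  induction m with
  | zero => norm_num
  | succ k ih =>
    have hf := fibid k
    have e1 : 2*(k+1)+1 = 2*k+3 := by ring
    have e2 : 2*(k+1)+3 = 2*k+5 := by ring
    rw [e1, e2]
    zify at hf ih ⊢
    nlinarith [hf, ih]

lemma sol (n : ℕ) (hn : 1 ≤ n) :
    (Nat.fib (2*n-1)+1)^2 + (Nat.fib (2*n-1)+1) + (Nat.fib (2*n+1)+1)^2 + (Nat.fib (2*n+1)+1)
      = 3 * (Nat.fib (2*n-1)+1) * (Nat.fib (2*n+1)+1) := by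
  obtain ⟨m, rfl⟩ : ∃ m, n = m + 1 := ⟨n - 1, by omega⟩
  rw [show 2 * (m + 1) - 1 = 2 * m + 1 by omega, show 2 * (m + 1) + 1 = 2 * m + 3 by ring]
  exact sol' m

lemma descent : ∀ b a : ℕ, 0 < a → 0 < b → a ≤ b → a ^ 2 + a + b ^ 2 + b = 3 * a * b →
    (a = 2 ∧ b = 2) ∨
    ∃ n, 1 ≤ n ∧ a = Nat.fib (2 * n - 1) + 1 ∧ b = Nat.fib (2 * n + 1) + 1 := by
  intro b
  induction b using Nat.strong_induction_on with
  | _ b ih =>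
    intro a ha hb hab heq
    rcases eq_or_lt_of_le hab with rfl | hlt
    · left
      have h2 : a ^ 2 = 2 * a := by nlinarith
      have : a = 2 := by nlinarith
      exact ⟨this, this⟩
    · have hb3 : b + 1 < 3 * a := by nlinarith
      set c : ℕ := 3 * a - 1 - b with hc
      have hsum : b + c + 1 = 3 * a := by omega
      have hc1 : 1 ≤ c := by omega
      have hcb : c * b = a ^ 2 + a := by
        have h : (c + b + 1) * b = 3 * a * b := by rw [show c + b + 1 = 3 * a by omega]
        nlinarith
      have hca : c ≤ a := by
        have : c * b ≤ a * b := by nlinarith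
        exact Nat.le_of_mul_le_mul_right this hb
      have heq2 : c ^ 2 + c + a ^ 2 + a = 3 * c * a := by
        zify at heq hsum ⊢
        linear_combination heq + ((c : ℤ) - b) * hsum
      rcases ih a hlt c hc1 ha hca heq2 with ⟨hc2, ha2⟩ | ⟨n, hn, hcf, haf⟩
      · right
        refine ⟨1, le_refl 1, ?_, ?_⟩ <;> simp [Nat.fib] <;> omega
      · right
        refine ⟨n + 1, by omega, ?_, ?_⟩
        · rw [show 2 * (n + 1) - 1 = 2 * n + 1 by omega]; exact haf
        · obtain ⟨m, rfl⟩ : ∃ m, n = m + 1 := ⟨n - 1, by omega⟩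
          have hf := fibid m
          rw [show 2 * (m + 1 + 1) + 1 = 2 * m + 5 by ring]
          rw [show 2 * (m + 1) - 1 = 2 * m + 1 by omega] at hcf
          rw [show 2 * (m + 1) + 1 = 2 * m + 3 by ring] at haf
          omega

theorem classification_k3 :
    (∀ a b : ℕ, 0 < a → 0 < b → a ≤ b → a ^ 2 + a + b ^ 2 + b = 3 * a * b →
      (a = 2 ∧ b = 2) ∨
      ∃ n, 1 ≤ n ∧ a = Nat.fib (2 * n - 1) + 1 ∧ b = Nat.fib (2 * n + 1) + 1) ∧
    {p : ℕ × ℕ | 0 < p.1 ∧ 0 < p.2 ∧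
        p.1 ^ 2 + p.1 + p.2 ^ 2 + p.2 = 3 * p.1 * p.2} =
      {p : ℕ × ℕ | ∃ n, 1 ≤ n ∧ p = (Nat.fib (2 * n - 1) + 1, Nat.fib (2 * n + 1) + 1)} ∪
      {p : ℕ × ℕ | ∃ n, 1 ≤ n ∧ p = (Nat.fib (2 * n + 1) + 1, Nat.fib (2 * n - 1) + 1)} ∪
      {(2, 2), (3, 2)} := by
  constructor
  · exact fun a b ha hb hab heq => descent b a ha hb hab heq
  · ext ⟨x, y⟩
    simp only [Set.mem_setOf_eq, Set.mem_union, Set.mem_insert_iff, Set.mem_singleton_iff,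
      Prod.mk.injEq]
    constructor
    · rintro ⟨hx, hy, heq⟩
      rcases le_total x y with h | h
      · rcases descent y x hx hy h heq with ⟨h1, h2⟩ | ⟨n, hn, h1, h2⟩
        · right; left; exact ⟨h1, h2⟩
        · left; left; exact ⟨n, hn, by simp [h1, h2]⟩
      · have heq' : y ^ 2 + y + x ^ 2 + x = 3 * y * x := by
          rw [show 3 * y * x = 3 * x * y from by ring]; linarith
        rcases descent x y hy hx h heq' with ⟨h1, h2⟩ | ⟨n, hn, h1, h2⟩
        · right; left; exact ⟨h2, h1⟩
        · left; right; exact ⟨n, hn, by simp [h1, h2]⟩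
    · rintro ((⟨n, hn, h1, h2⟩ | ⟨n, hn, h1, h2⟩) | ⟨h1, h2⟩ | ⟨h1, h2⟩)
      · subst h1; subst h2
        exact ⟨by positivity, by positivity, sol n hn⟩
      · subst h1; subst h2
        refine ⟨by positivity, by positivity, ?_⟩
        have h := sol n hn
        rw [show 3 * (Nat.fib (2*n+1)+1) * (Nat.fib (2*n-1)+1)
            = 3 * (Nat.fib (2*n-1)+1) * (Nat.fib (2*n+1)+1) from by ring]
        linarith
      · subst h1; subst h2; norm_num
      · subst h1; subst h2; norm_num
end

section
/- Define the sequence (bₙ) of positive integers by b₀ = b₁ = 1 and bₙ = 4bₙ₋₁ − 1 − bₙ₋₂ for n ≥ 2. Then for every n ≥ 0, the pair (bₙ, bₙ₊₁) satisfies bₙ² + bₙ + bₙ₊₁² + bₙ₊₁ = 4·bₙ·bₙ₊₁, and conversely every pair (a, b) of positive integers with a ≤ b and a² + a + b² + b = 4ab equals (bₙ, bₙ₊₁) for some n ≥ 0. -/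
theorem classification_k4 (b : ℕ → ℕ) (h0 : b 0 = 1) (h1 : b 1 = 1)
    (hrec : ∀ n, b (n + 2) + b n + 1 = 4 * b (n + 1)) :
    (∀ n, (b n) ^ 2 + b n + (b (n + 1)) ^ 2 + b (n + 1) = 4 * b n * b (n + 1)) ∧
    (∀ a c : ℕ, 0 < a → 0 < c → a ≤ c → a ^ 2 + a + c ^ 2 + c = 4 * a * c →
      ∃ n, a = b n ∧ c = b (n + 1)) := by
  have fwd : ∀ n, (b n) ^ 2 + b n + (b (n + 1)) ^ 2 + b (n + 1) = 4 * b n * b (n + 1) := by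
    intro n
    induction n with
    | zero => simp [h0, h1]
    | succ m ih =>
      have hr := hrec m
      have hr' : (b (m+2) : ℤ) + b m + 1 = 4 * b (m+1) := by exact_mod_cast hr
      have ih' : (b m : ℤ)^2 + b m + (b (m+1))^2 + b (m+1) = 4 * b m * b (m+1) := by
        exact_mod_cast ih
      have : (b (m+1) : ℤ)^2 + b (m+1) + (b (m+2))^2 + b (m+2) = 4 * b (m+1) * b (m+2) := by
        nlinarith [hr', ih']
      exact_mod_cast this
  refine ⟨fwd, ?_⟩
  intro a c
  induction c using Nat.strong_induction_on generalizing a with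
  | _ c IH =>
    intro ha hc hac heq
    rcases eq_or_lt_of_le hac with heqac | hlt
    · subst heqac
      have : a = 1 := by nlinarith
      exact ⟨0, by simp [h0, h1, this]⟩
    · have heqZ : (a:ℤ)^2 + a + c^2 + c = 4 * a * c := by exact_mod_cast heq
      have hkey : (a : ℤ) * (a + 1) = c * (4 * a - 1 - c) := by nlinarith [heqZ]
      have hdpos : (0:ℤ) < 4 * a - 1 - c := by
        have h1 : (0:ℤ) < (a:ℤ) * (a+1) := by positivity
        have hc' : (0:ℤ) < c := by exact_mod_cast hc
        nlinarith [hkey]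
      have hcle : c + 2 ≤ 4 * a := by
        have : (c:ℤ) + 2 ≤ 4 * a := by linarith
        exact_mod_cast this
      set d : ℕ := 4 * a - 1 - c with hd
      have hdZ : (d:ℤ) = 4 * a - 1 - c := by
        have h' : d = 4 * a - 1 - c := rfl
        omega
      have hdpos' : 0 < d := by omega
      have hdle : d ≤ a := by
        have hc1 : (a:ℤ) + 1 ≤ c := by exact_mod_cast hlt
        have : (d:ℤ) ≤ a := by nlinarith [hkey, hdZ]
        exact_mod_cast this
      have hdeq : d ^ 2 + d + a ^ 2 + a = 4 * d * a := by
        have : (d:ℤ)^2 + d + a^2 + a = 4 * d * a := by nlinarith [hkey, hdZ]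
        exact_mod_cast this
      obtain ⟨n, hn1, hn2⟩ := IH a hlt d hdpos' ha hdle hdeq
      refine ⟨n + 1, hn2, ?_⟩
      have hr := hrec n
      show c = b (n + 2)
      omega
end

section
/- Define aₙ = F(2n−1) + 1 for n ≥ 1 and a₀ = 2, where F is the Fibonacci sequence. Then for every n ≥ 1, the even- and odd-indexed terms factor as a₂ₙ = F(2n−1)·L(2n) and a₂ₙ₋₁ = F(2n−1)·L(2n−2), where L is the Lucas sequence. -/
def lucas : ℕ → ℕ
  | 0 => 2
  | 1 => 1
  | n + 2 => lucas (n + 1) + lucas n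

lemma lucas_eq (n : ℕ) : lucas (n + 1) = Nat.fib n + Nat.fib (n + 2) := by
  induction n using Nat.twoStepInduction with
  | zero => simp [lucas, Nat.fib]
  | one => simp [lucas]; rfl
  | more n ih1 ih2 =>
    show lucas (n + 2) + lucas (n + 1) = _
    rw [ih1, ih2, Nat.fib_add_two (n := n + 2), Nat.fib_add_two (n := n)]
    ring

lemma cassini (k : ℕ) :
    Nat.fib (2 * k + 1) * Nat.fib (2 * k + 3) = Nat.fib (2 * k + 2) ^ 2 + 1 := by
  induction k with
  | zero => simp [Nat.fib]
  | succ k ih =>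
    have f3 : Nat.fib (2 * k + 3) = Nat.fib (2 * k + 1) + Nat.fib (2 * k + 2) :=
      Nat.fib_add_two
    have f4 : Nat.fib (2 * k + 4) = Nat.fib (2 * k + 2) + Nat.fib (2 * k + 3) :=
      Nat.fib_add_two
    have f5 : Nat.fib (2 * k + 5) = Nat.fib (2 * k + 3) + Nat.fib (2 * k + 4) :=
      Nat.fib_add_two
    rw [show 2 * (k + 1) + 1 = 2 * k + 3 from by ring,
      show 2 * (k + 1) + 2 = 2 * k + 4 from by ring,
      show 2 * (k + 1) + 3 = 2 * k + 5 from by ring, f5, f4, f3]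
    nlinarith [ih]

lemma lemA (m : ℕ) :
    Nat.fib (2 * m + 1) * lucas (2 * m + 2) = Nat.fib (4 * m + 3) + 1 := by
  have hl := lucas_eq (2 * m + 1)
  have hf : Nat.fib (4 * m + 3) = Nat.fib (2 * m + 1) * Nat.fib (2 * m + 1)
      + Nat.fib (2 * m + 2) * Nat.fib (2 * m + 2) := by
    have h := Nat.fib_add (2 * m + 1) (2 * m + 1)
    convert h using 2 <;> omega
  have hc := cassini m
  have f3 : Nat.fib (2 * m + 3) = Nat.fib (2 * m + 1) + Nat.fib (2 * m + 2) :=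
    Nat.fib_add_two
  rw [show (2 * m + 2 : ℕ) = (2 * m + 1) + 1 from rfl, hl,
    show (2 * m + 1 + 2 : ℕ) = 2 * m + 3 from rfl, hf]
  nlinarith [hc, f3]

lemma lemB (m : ℕ) :
    Nat.fib (2 * m + 1) * lucas (2 * m) = Nat.fib (4 * m + 1) + 1 := by
  cases m with
  | zero => simp [lucas]
  | succ k =>
    have hf : Nat.fib (4 * k + 5) = Nat.fib (2 * k + 2) * Nat.fib (2 * k + 2)
        + Nat.fib (2 * k + 3) * Nat.fib (2 * k + 3) := by
      have h := Nat.fib_add (2 * k + 2) (2 * k + 2)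
      convert h using 2 <;> omega
    have hc := cassini k
    rw [show 2 * (k + 1) + 1 = 2 * k + 3 from by ring,
      show 4 * (k + 1) + 1 = 4 * k + 5 from by ring,
      show 2 * (k + 1) = (2 * k + 1) + 1 from by ring, lucas_eq,
      show (2 * k + 1 + 2 : ℕ) = 2 * k + 3 from rfl, hf]
    nlinarith [hc]

theorem aseq_factorization (a : ℕ → ℕ) (h0 : a 0 = 2)
    (hn : ∀ n, 1 ≤ n → a n = Nat.fib (2 * n - 1) + 1) :
    ∀ n, 1 ≤ n →
      a (2 * n) = Nat.fib (2 * n - 1) * lucas (2 * n) ∧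
      a (2 * n - 1) = Nat.fib (2 * n - 1) * lucas (2 * n - 2) := by
  intro n hn1
  obtain ⟨m, rfl⟩ : ∃ m, n = m + 1 := ⟨n - 1, by omega⟩
  have h1 := hn (2 * (m + 1)) (by omega)
  have h2 := hn (2 * (m + 1) - 1) (by omega)
  have e4 : 2 * (2 * (m + 1)) - 1 = 4 * m + 3 := by omega
  have e5 : 2 * (2 * (m + 1) - 1) - 1 = 4 * m + 1 := by omega
  rw [e4] at h1; rw [e5] at h2
  rw [show 2 * (m + 1) - 1 = 2 * m + 1 from by omega,
    show 2 * (m + 1) - 2 = 2 * m from by omega,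
    show 2 * (m + 1) = 2 * m + 2 from by ring] at *
  rw [h1, h2]
  exact ⟨(lemA m).symm, (lemB m).symm⟩
end

section
/- Define aₙ = F(2n−1) + 1 for n ≥ 1 and a₀ = 2, where F is the Fibonacci sequence, and set dₙ = gcd(aₙ, aₙ₊₁). Then for all n ≥ 1, d₂ₙ₋₁ = F(2n−1) and d₂ₙ = L(2n), where L is the Lucas sequence. -/
lemma cassiniZ : ∀ n, (Nat.fib (n+2) : ℤ) * Nat.fib n = (Nat.fib (n+1) : ℤ)^2 + (-1)^(n+1) := by
  intro n
  induction n with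
  | zero => simp
  | succ m ih =>
    have hw : (Nat.fib (m+3) : ℤ) = Nat.fib (m+1) + Nat.fib (m+2) := by
      exact_mod_cast Nat.fib_add_two (n := m+1)
    have hz : (Nat.fib (m+2) : ℤ) = Nat.fib m + Nat.fib (m+1) := by
      exact_mod_cast Nat.fib_add_two (n := m)
    have key : ((-1:ℤ))^(m+2) = -(-1)^(m+1) := by rw [pow_succ]; ring
    show (Nat.fib (m+3) : ℤ) * Nat.fib (m+1) = (Nat.fib (m+2) : ℤ)^2 + (-1)^(m+2)
    rw [hw, hz, key]
    rw [hz] at ih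
    linear_combination -ih

lemma cassiniE : ∀ n, Nat.fib (2*n+3) * Nat.fib (2*n+1) = Nat.fib (2*n+2)^2 + 1 := by
  intro n
  have h := cassiniZ (2*n+1)
  have hp : ((-1:ℤ))^(2*n+1+1) = 1 := by
    rw [show 2*n+1+1 = 2*(n+1) by ring, pow_mul]; norm_num
  rw [hp] at h
  zify
  convert h using 2

lemma lucas_succ : ∀ n, lucas (n+1) = Nat.fib n + Nat.fib (n+2) := by
  intro n
  induction n using Nat.twoStepInduction with
  | zero => decide
  | one => decide
  | more m ih1 ih2 =>
    show lucas (m+2) + lucas (m+1) = _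
    rw [ih1, ih2]
    have e1 : Nat.fib (m+2) = Nat.fib m + Nat.fib (m+1) := Nat.fib_add_two
    have e2 : Nat.fib (m+3) = Nat.fib (m+1) + Nat.fib (m+2) := Nat.fib_add_two
    have e3 : Nat.fib (m+4) = Nat.fib (m+2) + Nat.fib (m+3) := Nat.fib_add_two
    show Nat.fib (m+1) + Nat.fib (m+3) + (Nat.fib m + Nat.fib (m+2)) =
      Nat.fib (m+2) + Nat.fib (m+4)
    omega

lemma fib_two_mul_add_one (n : ℕ) :
    Nat.fib (2*n+1) = Nat.fib n * Nat.fib n + Nat.fib (n+1) * Nat.fib (n+1) := by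
  have := Nat.fib_add n n
  rw [show n + n + 1 = 2*n+1 by ring] at this
  exact this

lemma P1 : ∀ j, Nat.fib (4*j+1) + 1 = Nat.fib (2*j+1) * lucas (2*j) := by
  intro j
  cases j with
  | zero => decide
  | succ i =>
    rw [show 2*(i+1)+1 = 2*i+3 by ring, show 2*(i+1) = (2*i+1)+1 by ring, lucas_succ,
      show 4*(i+1)+1 = 2*(2*i+2)+1 by ring, fib_two_mul_add_one,
      show 2*i+2+1 = 2*i+3 by ring, show 2*i+1+2 = 2*i+3 by ring]
    have hc := cassiniE i
    nlinarith [hc]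

lemma P2 : ∀ j, Nat.fib (4*j+3) + 1 = Nat.fib (2*j+1) * lucas (2*j+2) := by
  intro j
  rw [show 2*j+2 = (2*j+1)+1 by ring, lucas_succ,
    show 4*j+3 = 2*(2*j+1)+1 by ring, fib_two_mul_add_one,
    show 2*j+1+1 = 2*j+2 by ring, show 2*j+1+2 = 2*j+3 by ring]
  have hc := cassiniE j
  nlinarith [hc]

lemma lucas_coprime_succ : ∀ n, Nat.gcd (lucas n) (lucas (n+1)) = 1 := by
  intro n
  induction n with
  | zero => decide
  | succ m ih =>
    show Nat.gcd (lucas (m+1)) (lucas (m+1) + lucas m) = 1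
    rw [Nat.gcd_self_add_right, Nat.gcd_comm]
    exact ih

lemma lucas_gcd_two (n : ℕ) : Nat.gcd (lucas (2*n)) (lucas (2*n+2)) = 1 := by
  show Nat.gcd (lucas (2*n)) (lucas (2*n+1) + lucas (2*n)) = 1
  rw [Nat.gcd_add_self_right]
  exact lucas_coprime_succ (2*n)

lemma fib_gcd_two (n : ℕ) : Nat.gcd (Nat.fib (2*n+1)) (Nat.fib (2*n+3)) = 1 := by
  rw [show 2*n+3 = (2*n+1)+2 by ring, Nat.fib_add_two, Nat.gcd_self_add_right]
  exact Nat.fib_coprime_fib_succ (2*n+1)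

theorem gcd_consecutive_aseq (a : ℕ → ℕ) (h0 : a 0 = 2)
    (hn : ∀ n, 1 ≤ n → a n = Nat.fib (2 * n - 1) + 1)
    (d : ℕ → ℕ) (hd : ∀ n, d n = Nat.gcd (a n) (a (n + 1))) :
    ∀ n, 1 ≤ n → d (2 * n - 1) = Nat.fib (2 * n - 1) ∧ d (2 * n) = lucas (2 * n) := by
  intro n hn1
  obtain ⟨j, rfl⟩ : ∃ j, n = j + 1 := ⟨n - 1, by omega⟩
  have ha1 : a (2*j+1) = Nat.fib (2*j+1) * lucas (2*j) := by
    rw [hn (2*j+1) (by omega), show 2*(2*j+1)-1 = 4*j+1 by omega, P1]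
  have ha2 : a (2*j+2) = Nat.fib (2*j+1) * lucas (2*j+2) := by
    rw [hn (2*j+2) (by omega), show 2*(2*j+2)-1 = 4*j+3 by omega, P2]
  have ha3 : a (2*j+3) = Nat.fib (2*j+3) * lucas (2*j+2) := by
    rw [hn (2*j+3) (by omega), show 2*(2*j+3)-1 = 4*(j+1)+1 by omega, P1 (j+1),
      show 2*(j+1)+1 = 2*j+3 by ring, show 2*(j+1) = 2*j+2 by ring]
  constructor
  · rw [show 2*(j+1)-1 = 2*j+1 by omega, hd, show 2*j+1+1 = 2*j+2 by ring, ha1, ha2,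
      Nat.gcd_mul_left, lucas_gcd_two, Nat.mul_one]
  · rw [show 2*(j+1) = 2*j+2 by ring, hd, show 2*j+2+1 = 2*j+3 by ring, ha2, ha3,
      Nat.mul_comm (Nat.fib (2*j+1)), Nat.mul_comm (Nat.fib (2*j+3)),
      Nat.gcd_mul_left, fib_gcd_two, Nat.mul_one]
end

section
/- Define the sequence (bₙ) by b₀ = b₁ = 1 and bₙ = 4bₙ₋₁ − 1 − bₙ₋₂ for n ≥ 2. Then for all n ≥ 1: b₂ₙ + b₂ₙ₊₁ = 2·gcd(b₂ₙ, b₂ₙ₊₁)² and b₂ₙ₋₁ + b₂ₙ = 3·gcd(b₂ₙ₋₁, b₂ₙ)². -/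
private def gseq : ℕ → ℕ
  | 0 => 2
  | 1 => 7
  | n + 2 => 4 * gseq (n + 1) - gseq n

private def hseq : ℕ → ℕ
  | 0 => 1
  | 1 => 3
  | n + 2 => 4 * hseq (n + 1) - hseq n

private lemma hseq_mono : ∀ n, hseq n ≤ hseq (n + 1) := by
  intro n
  induction n using Nat.twoStepInduction with
  | zero => simp [hseq]
  | one => simp [hseq]
  | more n ih1 ih2 =>
    show hseq (n + 2) ≤ 4 * hseq (n + 2) - hseq (n + 1)
    have : hseq (n + 1) ≤ hseq (n + 2) := ih2
    omega

private lemma gseq_mono : ∀ n, gseq n ≤ gseq (n + 1) := by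
  intro n
  induction n using Nat.twoStepInduction with
  | zero => simp [gseq]
  | one => simp [gseq]
  | more n ih1 ih2 =>
    show gseq (n + 2) ≤ 4 * gseq (n + 2) - gseq (n + 1)
    have : gseq (n + 1) ≤ gseq (n + 2) := ih2
    omega

private lemma hseq_rec (n : ℕ) : hseq (n + 2) + hseq n = 4 * hseq (n + 1) := by
  have h := hseq_mono n
  show 4 * hseq (n + 1) - hseq n + hseq n = 4 * hseq (n + 1)
  omega

private lemma gseq_rec (n : ℕ) : gseq (n + 2) + gseq n = 4 * gseq (n + 1) := by
  have h := gseq_mono n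
  show 4 * gseq (n + 1) - gseq n + gseq n = 4 * gseq (n + 1)
  omega

private lemma key_rel : ∀ n,
    hseq n + hseq (n + 1) = 2 * gseq n ∧
    gseq n + gseq (n + 1) = 3 * hseq (n + 1) ∧
    2 * gseq n ^ 2 + 3 * hseq (n + 1) ^ 2 + 1 = 6 * (gseq n * hseq (n + 1)) := by
  intro n
  induction n with
  | zero => refine ⟨by simp [hseq, gseq], by simp [hseq, gseq], by simp [hseq, gseq]⟩
  | succ n ih =>
    obtain ⟨e1, e2, e3⟩ := ih
    have hr := hseq_rec n
    have gr := gseq_rec n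
    have f1 : hseq (n + 1) + hseq (n + 2) = 2 * gseq (n + 1) := by omega
    have f2 : gseq (n + 1) + gseq (n + 2) = 3 * hseq (n + 2) := by omega
    rw [show n + 1 + 1 = n + 2 from rfl]
    refine ⟨f1, f2, ?_⟩
    have E2 : (gseq n : ℤ) + (gseq (n + 1) : ℤ) = 3 * (hseq (n + 1) : ℤ) := by exact_mod_cast e2
    have F1 : (hseq (n + 1) : ℤ) + (hseq (n + 2) : ℤ) = 2 * (gseq (n + 1) : ℤ) := by
      exact_mod_cast f1
    have hg1 : (gseq (n + 1) : ℤ) = 3 * (hseq (n + 1) : ℤ) - (gseq n : ℤ) := by linarith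
    have hh2 : (hseq (n + 2) : ℤ) = 2 * (gseq (n + 1) : ℤ) - (hseq (n + 1) : ℤ) := by linarith
    have e3' : 2 * (gseq n : ℤ) ^ 2 + 3 * (hseq (n + 1) : ℤ) ^ 2 + 1
        = 6 * ((gseq n : ℤ) * (hseq (n + 1) : ℤ)) := by exact_mod_cast e3
    have : 2 * (gseq (n + 1) : ℤ) ^ 2 + 3 * (hseq (n + 2) : ℤ) ^ 2 + 1
        = 6 * ((gseq (n + 1) : ℤ) * (hseq (n + 2) : ℤ)) := by
      rw [hh2, hg1]; linear_combination e3'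
    exact_mod_cast this

private lemma coprime_step (a b c : ℕ) (h : b + a = 4 * c) (hc : Nat.Coprime c a) :
    Nat.Coprime c b := by
  have hd1 : Nat.gcd c b ∣ 4 * c := Dvd.dvd.mul_left (Nat.gcd_dvd_left c b) 4
  have hd2 : Nat.gcd c b ∣ a := by
    have hs := Nat.dvd_sub hd1 (Nat.gcd_dvd_right c b)
    have ha : 4 * c - b = a := by omega
    rwa [ha] at hs
  have hg : Nat.gcd c b ∣ Nat.gcd c a := Nat.dvd_gcd (Nat.gcd_dvd_left c b) hd2
  rw [hc] at hg
  exact Nat.dvd_one.mp hg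

private lemma coprime_h : ∀ n, Nat.Coprime (hseq n) (hseq (n + 1)) := by
  intro n
  induction n with
  | zero => decide
  | succ n ih =>
    exact coprime_step (hseq n) (hseq (n + 2)) (hseq (n + 1)) (hseq_rec n) ih.symm

private lemma coprime_g : ∀ n, Nat.Coprime (gseq n) (gseq (n + 1)) := by
  intro n
  induction n with
  | zero => decide
  | succ n ih =>
    exact coprime_step (gseq n) (gseq (n + 2)) (gseq (n + 1)) (gseq_rec n) ih.symm

theorem normalized_sum_k4 (b : ℕ → ℕ) (h0 : b 0 = 1) (h1 : b 1 = 1)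
    (hrec : ∀ n, b (n + 2) + b n + 1 = 4 * b (n + 1)) :
    ∀ n, 1 ≤ n →
      b (2 * n) + b (2 * n + 1) = 2 * Nat.gcd (b (2 * n)) (b (2 * n + 1)) ^ 2 ∧
      b (2 * n - 1) + b (2 * n) = 3 * Nat.gcd (b (2 * n - 1)) (b (2 * n)) ^ 2 := by
  have B : ∀ n, b (2 * n + 2) = gseq n * hseq n ∧ b (2 * n + 3) = gseq n * hseq (n + 1) := by
    intro n
    induction n with
    | zero =>
      have r0 := hrec 0
      have r1 := hrec 1
      norm_num at r0 r1
      constructor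
      · show b 2 = gseq 0 * hseq 0
        simp only [gseq, hseq]
        omega
      · show b 3 = gseq 0 * hseq 1
        simp only [gseq, hseq]
        omega
    | succ n ih =>
      obtain ⟨ib1, ib2⟩ := ih
      obtain ⟨e1, e2, e3⟩ := key_rel n
      obtain ⟨f1, f2, f3⟩ := key_rel (n + 1)
      rw [show n + 1 + 1 = n + 2 from rfl] at f1 f2 f3
      have E1 : (hseq n : ℤ) + (hseq (n + 1) : ℤ) = 2 * (gseq n : ℤ) := by exact_mod_cast e1
      have E2 : (gseq n : ℤ) + (gseq (n + 1) : ℤ) = 3 * (hseq (n + 1) : ℤ) := by exact_mod_cast e2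
      have F1 : (hseq (n + 1) : ℤ) + (hseq (n + 2) : ℤ) = 2 * (gseq (n + 1) : ℤ) := by
        exact_mod_cast f1
      have hg1 : (gseq (n + 1) : ℤ) = 3 * (hseq (n + 1) : ℤ) - (gseq n : ℤ) := by linarith
      have hhn : (hseq n : ℤ) = 2 * (gseq n : ℤ) - (hseq (n + 1) : ℤ) := by linarith
      have hh2 : (hseq (n + 2) : ℤ) = 2 * (gseq (n + 1) : ℤ) - (hseq (n + 1) : ℤ) := by linarith
      have e3' : 2 * (gseq n : ℤ) ^ 2 + 3 * (hseq (n + 1) : ℤ) ^ 2 + 1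
          = 6 * ((gseq n : ℤ) * (hseq (n + 1) : ℤ)) := by exact_mod_cast e3
      have key1 : gseq (n + 1) * hseq (n + 1) + gseq n * hseq n + 1
          = 4 * (gseq n * hseq (n + 1)) := by
        have : (gseq (n + 1) : ℤ) * (hseq (n + 1) : ℤ) + (gseq n : ℤ) * (hseq n : ℤ) + 1
            = 4 * ((gseq n : ℤ) * (hseq (n + 1) : ℤ)) := by
          rw [hg1, hhn]; linear_combination e3'
        exact_mod_cast this
      have key2 : gseq (n + 1) * hseq (n + 2) + gseq n * hseq (n + 1) + 1
          = 4 * (gseq (n + 1) * hseq (n + 1)) := by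
        have : (gseq (n + 1) : ℤ) * (hseq (n + 2) : ℤ) + (gseq n : ℤ) * (hseq (n + 1) : ℤ) + 1
            = 4 * ((gseq (n + 1) : ℤ) * (hseq (n + 1) : ℤ)) := by
          rw [hh2, hg1]; linear_combination e3'
        exact_mod_cast this
      have r1 := hrec (2 * n + 2)
      rw [show 2 * n + 2 + 2 = 2 * n + 4 from by ring,
          show 2 * n + 2 + 1 = 2 * n + 3 from by ring] at r1
      have r2 := hrec (2 * n + 3)
      rw [show 2 * n + 3 + 2 = 2 * n + 5 from by ring,
          show 2 * n + 3 + 1 = 2 * n + 4 from by ring] at r2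
      have hb4 : b (2 * n + 4) = gseq (n + 1) * hseq (n + 1) := by omega
      have hb5 : b (2 * n + 5) = gseq (n + 1) * hseq (n + 2) := by omega
      constructor
      · rw [show 2 * (n + 1) + 2 = 2 * n + 4 from by ring]
        exact hb4
      · rw [show 2 * (n + 1) + 3 = 2 * n + 5 from by ring, show n + 1 + 1 = n + 2 from rfl]
        exact hb5
  intro n hn
  obtain ⟨m, rfl⟩ : ∃ m, n = m + 1 := ⟨n - 1, by omega⟩
  constructor
  · rw [show 2 * (m + 1) + 1 = 2 * m + 3 from by ring, show 2 * (m + 1) = 2 * m + 2 from by ring,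
        (B m).1, (B m).2]
    obtain ⟨e1, e2, e3⟩ := key_rel m
    rw [Nat.gcd_mul_left, coprime_h m, mul_one]
    calc gseq m * hseq m + gseq m * hseq (m + 1)
        = gseq m * (hseq m + hseq (m + 1)) := by ring
      _ = gseq m * (2 * gseq m) := by rw [e1]
      _ = 2 * gseq m ^ 2 := by ring
  · rcases m with _ | k
    · have hb2 : b 2 = 2 := by
        have := (B 0).1
        simpa [gseq, hseq] using this
      norm_num [h1, hb2]
    · rw [show 2 * (k + 1 + 1) - 1 = 2 * k + 3 from by omega,
          show 2 * (k + 1 + 1) = 2 * (k + 1) + 2 from by ring,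
          (B k).2, (B (k + 1)).1]
      obtain ⟨e1, e2, e3⟩ := key_rel k
      rw [Nat.gcd_mul_right, coprime_g k, one_mul]
      calc gseq k * hseq (k + 1) + gseq (k + 1) * hseq (k + 1)
          = (gseq k + gseq (k + 1)) * hseq (k + 1) := by ring
        _ = 3 * hseq (k + 1) * hseq (k + 1) := by rw [e2]
        _ = 3 * hseq (k + 1) ^ 2 := by ring
end

section
/- Let a, b, k be positive integers satisfying a² + a + b² + b = k·a·b. Then (a + b) / gcd(a, b)² ∈ {1, 2, 3, 5}; more precisely, if k = 3 then (a + b) / gcd(a, b)² ∈ {1, 5}, and if k = 4 then (a + b) / gcd(a, b)² ∈ {2, 3}. -/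
private lemma gcd_sq_dvd_sum (a b k : ℕ) (h : a ^ 2 + a + b ^ 2 + b = k * a * b) :
    Nat.gcd a b ^ 2 ∣ a + b := by
  have hga : Nat.gcd a b ∣ a := Nat.gcd_dvd_left a b
  have hgb : Nat.gcd a b ∣ b := Nat.gcd_dvd_right a b
  have h1 : Nat.gcd a b ^ 2 ∣ a ^ 2 := pow_dvd_pow_of_dvd hga 2
  have h2 : Nat.gcd a b ^ 2 ∣ b ^ 2 := pow_dvd_pow_of_dvd hgb 2
  have h3 : Nat.gcd a b ^ 2 ∣ k * a * b := by
    have hd : Nat.gcd a b ^ 2 ∣ a * b := by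
      rw [pow_two]; exact mul_dvd_mul hga hgb
    rw [mul_assoc]; exact Dvd.dvd.mul_left hd k
  have h4 : k * a * b - a ^ 2 - b ^ 2 = a + b := by omega
  have := Nat.dvd_sub (Nat.dvd_sub h3 h1) h2
  rwa [h4] at this

private lemma vieta_main : ∀ n : ℕ, ∀ a b k : ℕ, 0 < a → 0 < b → 0 < k → a ≤ b →
    a + b ≤ n → a ^ 2 + a + b ^ 2 + b = k * a * b →
    (k = 3 ∧ ((a + b) / Nat.gcd a b ^ 2 = 1 ∨ (a + b) / Nat.gcd a b ^ 2 = 5)) ∨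
    (k = 4 ∧ ((a + b) / Nat.gcd a b ^ 2 = 2 ∨ (a + b) / Nat.gcd a b ^ 2 = 3)) := by
  intro n
  induction n with
  | zero => intro a b k ha hb hk hab hn h; omega
  | succ n ih =>
    intro a b k ha hb hk hab hn h
    rcases eq_or_lt_of_le hab with heq | hlt
    · -- base case a = b
      subst heq
      have h2 : 2 * a + 2 = k * a := by nlinarith
      have hk3le : 3 ≤ k := by nlinarith
      obtain ⟨m, rfl⟩ : ∃ m, k = m + 3 := ⟨k - 3, by omega⟩
      have hma : (m + 1) * a = 2 := by nlinarith
      have hdvd : a ∣ 2 := Dvd.intro_left (m + 1) hma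
      have ha2 : a ≤ 2 := Nat.le_of_dvd (by norm_num) hdvd
      interval_cases a
      · right
        have hm1 : m = 1 := by omega
        subst hm1
        norm_num
      · left
        have hm0 : m = 0 := by omega
        subst hm0
        norm_num
    · -- jump case a < b
      have hbka : b + 1 ≤ k * a := by
        have hmul : (b + 1) * b ≤ (k * a) * b := by nlinarith
        exact Nat.le_of_mul_le_mul_right hmul hb
      set c := k * a - 1 - b with hcdef
      have hc1 : b + c + 1 = k * a := by omega
      have hbc : b * c = a ^ 2 + a := by nlinarith [hc1]
      have hcpos : 0 < c := by nlinarith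
      have hca : c ≤ a := by
        have hmul : c * (a + 1) ≤ a * (a + 1) := by nlinarith
        exact Nat.le_of_mul_le_mul_right hmul (by omega)
      have heqc : c ^ 2 + c + a ^ 2 + a = k * c * a := by nlinarith
      have hIH := ih c a k hcpos ha hk hca (by omega) heqc
      set g := Nat.gcd a b with hgdef
      set h' := Nat.gcd c a with hhdef
      have hg2 : g ^ 2 ∣ a + b := gcd_sq_dvd_sum a b k h
      have hh2 : h' ^ 2 ∣ c + a := gcd_sq_dvd_sum c a k heqc
      have hga : g ∣ a := Nat.gcd_dvd_left a b
      have hgb : g ∣ b := Nat.gcd_dvd_right a b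
      have hhc : h' ∣ c := Nat.gcd_dvd_left c a
      have hha : h' ∣ a := Nat.gcd_dvd_right c a
      have hgpos : 0 < g := Nat.gcd_pos_of_pos_left _ ha
      have hhpos : 0 < h' := Nat.gcd_pos_of_pos_left _ hcpos
      -- coprimality of g and h'
      have hcop : Nat.Coprime g h' := by
        have hd1 : Nat.gcd g h' ∣ b + c + 1 := by
          rw [hc1]
          exact Dvd.dvd.mul_left (dvd_trans (Nat.gcd_dvd_left g h') hga) k
        have hd2 : Nat.gcd g h' ∣ b + c :=
          Nat.dvd_add (dvd_trans (Nat.gcd_dvd_left g h') hgb)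
            (dvd_trans (Nat.gcd_dvd_right g h') hhc)
        have hsub := Nat.dvd_sub hd1 hd2
        have h1 : Nat.gcd g h' ∣ 1 := by simpa using hsub
        exact Nat.eq_one_of_dvd_one h1
      -- a = g * h'
      have hagh : a = g * h' := by
        have hdvd1 : g * h' ∣ a := hcop.mul_dvd_of_dvd_of_dvd hga hha
        have hdvd2 : a ∣ g * h' := by
          obtain ⟨x, hx⟩ := hga
          obtain ⟨y, hy⟩ := hgb
          have hxy : Nat.Coprime x y := by
            have hc' := Nat.coprime_div_gcd_div_gcd (Nat.gcd_pos_of_pos_left b ha)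
            have e1 : a / Nat.gcd a b = x := by
              rw [← hgdef, hx]; exact Nat.mul_div_cancel_left x hgpos
            have e2 : b / Nat.gcd a b = y := by
              rw [← hgdef, hy]; exact Nat.mul_div_cancel_left y hgpos
            rwa [e1, e2] at hc'
          have hycx : y * c = x * (g * x + 1) := by
            have h6 : b * c = a * a + a := by rw [← pow_two]; exact hbc
            rw [hx, hy] at h6
            have h5 : g * (y * c) = g * (x * (g * x + 1)) := by
              calc g * (y * c) = (g * y) * c := by ring
                _ = g * x * (g * x) + g * x := h6
                _ = g * (x * (g * x + 1)) := by ring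
            exact Nat.eq_of_mul_eq_mul_left hgpos h5
          have hxyc : x ∣ y * c := by rw [hycx]; exact dvd_mul_right _ _
          have hxc : x ∣ c := Nat.Coprime.dvd_of_dvd_mul_left hxy hxyc
          have hxh : x ∣ h' := Nat.dvd_gcd hxc ⟨g, by rw [hx]; ring⟩
          rw [hx]
          exact mul_dvd_mul_left g hxh
        exact Nat.dvd_antisymm hdvd2 hdvd1
      -- key identity
      have hkey : (a + b) * (a + c) = (k + 2) * a ^ 2 := by
        have e1 : (a + b) * (a + c) = a ^ 2 + b * c + a * (b + c) := by ring
        have e2 : a * (b + c + 1) = k * a ^ 2 := by rw [hc1]; ring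
        have e3 : a * (b + c + 1) = a * (b + c) + a := by ring
        rw [e1, hbc]
        linarith [e2, e3]
      set s := (a + b) / g ^ 2 with hsdef
      set s' := (c + a) / h' ^ 2 with hs'def
      have hs : s * g ^ 2 = a + b := Nat.div_mul_cancel hg2
      have hs' : s' * h' ^ 2 = c + a := Nat.div_mul_cancel hh2
      have hss' : s * s' = k + 2 := by
        have hgh2 : 0 < (g * h') ^ 2 := by positivity
        apply Nat.eq_of_mul_eq_mul_right hgh2
        calc s * s' * (g * h') ^ 2 = (s * g ^ 2) * (s' * h' ^ 2) := by ring
          _ = (a + b) * (c + a) := by rw [hs, hs']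
          _ = (a + b) * (a + c) := by ring
          _ = (k + 2) * a ^ 2 := hkey
          _ = (k + 2) * (g * h') ^ 2 := by rw [← hagh]
      rcases hIH with ⟨hk3, hs'v⟩ | ⟨hk4, hs'v⟩
      · left
        refine ⟨hk3, ?_⟩
        subst hk3
        rcases hs'v with hv | hv <;> rw [hv] at hss' <;> omega
      · right
        refine ⟨hk4, ?_⟩
        subst hk4
        rcases hs'v with hv | hv <;> rw [hv] at hss' <;> omega

theorem normalized_sum_values (a b k : ℕ) (ha : 0 < a) (hb : 0 < b) (hk : 0 < k)
    (h : a ^ 2 + a + b ^ 2 + b = k * a * b) :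
    (a + b) / Nat.gcd a b ^ 2 ∈ ({1, 2, 3, 5} : Set ℕ) ∧
    (k = 3 → (a + b) / Nat.gcd a b ^ 2 ∈ ({1, 5} : Set ℕ)) ∧
    (k = 4 → (a + b) / Nat.gcd a b ^ 2 ∈ ({2, 3} : Set ℕ)) := by
  have hmain : (k = 3 ∧ ((a + b) / Nat.gcd a b ^ 2 = 1 ∨ (a + b) / Nat.gcd a b ^ 2 = 5)) ∨
      (k = 4 ∧ ((a + b) / Nat.gcd a b ^ 2 = 2 ∨ (a + b) / Nat.gcd a b ^ 2 = 3)) := by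
    rcases le_total a b with hab | hab
    · exact vieta_main (a + b) a b k ha hb hk hab le_rfl h
    · have := vieta_main (b + a) b a k hb ha hk hab le_rfl (by linarith [h])
      rwa [Nat.gcd_comm b a, Nat.add_comm b a] at this
  simp only [Set.mem_insert_iff, Set.mem_singleton_iff]
  rcases hmain with ⟨hk', hv⟩ | ⟨hk', hv⟩ <;>
    exact ⟨by omega, fun hh => by omega, fun hh => by omega⟩
end

section
/- Let a, b, k be positive integers satisfying a² + 2a + b² + 2b = k·a·b (equivalently (a+2)/b + (b+2)/a = k). Then k ∈ {3, 4, 6}. Moreover, if a > b then the integer a' = k·b − 2 − a is a positive integer satisfying (a')² + 2a' + b² + 2b = k·a'·b and a' < a. -/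
private lemma key_r2 : ∀ n : ℕ, ∀ a b k : ℤ, 0 < a → 0 < b → 0 < k →
    a ^ 2 + 2 * a + b ^ 2 + 2 * b = k * a * b → (a + b).toNat ≤ n →
    k = 3 ∨ k = 4 ∨ k = 6 := by
  intro n
  induction n with
  | zero => intro a b k ha hb hk h hn; omega
  | succ n ih =>
    intro a b k ha hb hk h hn
    rcases lt_trichotomy a b with hab | hab | hab
    · -- jump on b
      set c := k * a - 2 - b with hc
      have hbc : b * c = a ^ 2 + 2 * a := by rw [hc]; linear_combination -h
      have hc0 : 0 < c := by nlinarith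
      have hlt : c < b := by nlinarith
      have heq : a ^ 2 + 2 * a + c ^ 2 + 2 * c = k * a * c := by
        rw [hc]; linear_combination h
      exact ih a c k ha hc0 hk heq (by omega)
    · -- a = b
      subst hab
      have h2 : a * (2 * a + 4) = a * (k * a) := by linear_combination h
      have h3 : 2 * a + 4 = k * a := mul_left_cancel₀ (by omega) h2
      have hd : a ∣ 4 := ⟨k - 2, by linarith [h3, mul_sub k a (2:ℤ)]⟩
      have h4 : a ≤ 4 := Int.le_of_dvd (by norm_num) hd
      interval_cases a <;> omega
    · -- jump on a
      set c := k * b - 2 - a with hc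
      have hac : a * c = b ^ 2 + 2 * b := by rw [hc]; linear_combination -h
      have hc0 : 0 < c := by nlinarith
      have hlt : c < a := by nlinarith
      have heq : c ^ 2 + 2 * c + b ^ 2 + 2 * b = k * c * b := by
        rw [hc]; linear_combination h
      exact ih c b k hc0 hb hk heq (by omega)

theorem r_eq_two_case (a b k : ℤ) (ha : 0 < a) (hb : 0 < b) (hk : 0 < k)
    (h : a ^ 2 + 2 * a + b ^ 2 + 2 * b = k * a * b) :
    (k = 3 ∨ k = 4 ∨ k = 6) ∧
    (b < a →
      0 < k * b - 2 - a ∧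
      (k * b - 2 - a) ^ 2 + 2 * (k * b - 2 - a) + b ^ 2 + 2 * b = k * (k * b - 2 - a) * b ∧
      k * b - 2 - a < a) := by
  constructor
  · exact key_r2 (a + b).toNat a b k ha hb hk h le_rfl
  · intro hba
    have hac : a * (k * b - 2 - a) = b ^ 2 + 2 * b := by linear_combination -h
    have hc0 : 0 < k * b - 2 - a := by nlinarith
    have hlt : k * b - 2 - a < a := by nlinarith
    exact ⟨hc0, by linear_combination h, hlt⟩
end
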